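/- The point EE^c = (A_w^c, F_w^c, F_{pw}^c, M_w^c) with A_w^c = K_a(1 - 1/G_0w), F_w^c = b_f ψ A_w^c / (μ_fw + σ), F_{pw}^c = b_f ψ σ A_w^c / ((μ_fw + σ) μ_fw), M_w^c = b_m ψ A_w^c / μ_mw, with all uninfected compartments zero, is an equilibrium of the Wolbachia system when v_w = 1. -/

import Mathlib

/-!
Along the chain `A_w → F_w → F_pw` every flow is linear, so at rest `F_pw = ρ A_w` with
`ρ = b_f ψ σ / ((μ_fw + σ) μ_fw)`, and `G_0w = φ_w ρ / (μ_a + ψ)`. The `A_w` equation then reads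
`(μ_a + ψ) A_w ((1 - A_w / K_a) G_0w - 1) = 0`, which `A_w = K_a (1 - 1 / G_0w)` solves.
-/

theorem sub_mul_div_cancel_eq_zero {α : Type*} [Field α] {a c : α} (hc : c ≠ 0) :
    a - c * (a / c) = 0 := by
  rw [mul_div_cancel₀ a hc, sub_self]

theorem logistic_recruitment_sub_loss_eq_zero {α : Type*} [Field α] {φ ρ m K G A : α}
    (hK : K ≠ 0) (hG : G = φ * ρ / m) (hG0 : G ≠ 0) (hA : A = K * (1 - 1 / G)) :
    φ * (1 - A / K) * (ρ * A) - m * A = 0 := by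
  have hsat : 1 - A / K = 1 / G := by
    rw [hA, mul_div_cancel_left₀ _ hK]
    ring
  obtain ⟨⟨hφ, hρ⟩, hm⟩ : (φ ≠ 0 ∧ ρ ≠ 0) ∧ m ≠ 0 := by
    simpa only [hG, ne_eq, div_eq_zero_iff, mul_eq_zero, not_or] using hG0
  rw [hsat, hG]
  field_simp
  ring

theorem complete_infection_equilibrium_general
    (K_a b_f b_m ψ σ μ_a μ_fw μ_mw φ_w : ℝ)
    (hK : 0 < K_a) (hσ : 0 < σ)
    (hμfw : 0 < μ_fw) (hμmw : 0 < μ_mw)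
    (G_0w : ℝ)
    (hG : G_0w = b_f * (ψ / (μ_a + ψ)) * (σ / (σ + μ_fw)) * (φ_w / μ_fw))
    (hG1 : 1 < G_0w)
    (A_w F_w F_pw M_w : ℝ)
    (hA : A_w = K_a * (1 - 1 / G_0w))
    (hF : F_w = b_f * ψ * A_w / (μ_fw + σ))
    (hFp : F_pw = b_f * ψ * σ * A_w / ((μ_fw + σ) * μ_fw))
    (hM : M_w = b_m * ψ * A_w / μ_mw) :
    φ_w * (1 - A_w / K_a) * F_pw - (μ_a + ψ) * A_w = 0 ∧
    b_f * ψ * A_w - (σ + μ_fw) * F_w = 0 ∧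
    σ * F_w - μ_fw * F_pw = 0 ∧
    b_m * ψ * A_w - μ_mw * M_w = 0 := by
  set ρ := b_f * ψ * σ / ((μ_fw + σ) * μ_fw)
  have hFp_yield : F_pw = ρ * A_w := by simp only [ρ, hFp, div_eq_mul_inv, mul_inv]; ring
  have hFp_maturation : F_pw = σ * F_w / μ_fw := by
    simp only [hFp, hF, div_eq_mul_inv, mul_inv]; ring
  have hG_yield : G_0w = φ_w * ρ / (μ_a + ψ) := by
    simp only [ρ, hG, div_eq_mul_inv, mul_inv]; ring
  refine ⟨?_, ?_, ?_, ?_⟩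
  · rw [hFp_yield]
    exact logistic_recruitment_sub_loss_eq_zero hK.ne' hG_yield
      (one_pos.trans hG1).ne' hA
  · rw [hF, add_comm σ]
    exact sub_mul_div_cancel_eq_zero (by positivity)
  · rw [hFp_maturation]
    exact sub_mul_div_cancel_eq_zero hμfw.ne'
  · rw [hM]
    exact sub_mul_div_cancel_eq_zero hμmw.ne'

theorem complete_infection_equilibrium
    (K_a b_f b_m ψ σ μ_a μ_fw μ_mw φ_w : ℝ)
    (hK : 0 < K_a) (hbf : 0 < b_f) (hbm : 0 < b_m) (hψ : 0 < ψ) (hσ : 0 < σ)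
    (hμa : 0 < μ_a) (hμfw : 0 < μ_fw) (hμmw : 0 < μ_mw) (hφw : 0 < φ_w)
    (G_0w : ℝ)
    (hG : G_0w = b_f * (ψ / (μ_a + ψ)) * (σ / (σ + μ_fw)) * (φ_w / μ_fw))
    (hG1 : 1 < G_0w)
    (A_w F_w F_pw M_w : ℝ)
    (hA : A_w = K_a * (1 - 1 / G_0w))
    (hF : F_w = b_f * ψ * A_w / (μ_fw + σ))
    (hFp : F_pw = b_f * ψ * σ * A_w / ((μ_fw + σ) * μ_fw))
    (hM : M_w = b_m * ψ * A_w / μ_mw) :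
    φ_w * (1 - A_w / K_a) * F_pw - (μ_a + ψ) * A_w = 0 ∧
    b_f * ψ * A_w - (σ + μ_fw) * F_w = 0 ∧
    σ * F_w - μ_fw * F_pw = 0 ∧
    b_m * ψ * A_w - μ_mw * M_w = 0 :=
  complete_infection_equilibrium_general K_a b_f b_m ψ σ μ_a μ_fw μ_mw φ_w hK hσ hμfw hμmw G_0w hG
    hG1 A_w F_w F_pw M_w hA hF hFp hM
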